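/- (Strictly proper asymptotics.) Suppose m < n (the plant is strictly proper). Then H(ω) → +∞ and σ₀·φ′(ω) → +∞ as ω → +∞; in particular there exists Ω such that φ′(ω) < 0 for all ω > Ω, so every characteristic root crossing the line Re(s) = σ₀ at sufficiently high frequency enters the region Re(s) ≥ σ₀. -/

import Mathlib

/-!
On the line `s = σ₀ + iω` a factor `s - z` has `log |s - z| = ½ log (σ̃² + Δω²) = log ω + o(1)`,
so `ln |G| = (m - n) log ω + O(1) → -∞`, whence `H = ln |G| / σ₀ → +∞`. Differentiating
`φ = Θ - ω ln |G| / σ₀` gives `σ₀ φ' = σ₀ Θ' - ln |G| - ω (ln |G|)'`, where `Θ' = Σ σ̃ / γ → 0`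
and `ω (ln |G|)' → m - n`; hence `σ₀ φ' → +∞`, and `φ' < 0` eventually because `σ₀ < 0`.
-/

open Complex Real Filter Finset Set
open scoped Topology

lemma Complex.log_norm_eq_half_log (z : ℂ) :
    Real.log ‖z‖ = Real.log (z.re ^ 2 + z.im ^ 2) / 2 := by
  have h : z.re ^ 2 + z.im ^ 2 = ‖z‖ ^ 2 := by rw [Complex.sq_norm, Complex.normSq_apply]; ring
  rw [h, Real.log_pow]
  ring

lemma tendsto_one_sub_const_div (c : ℝ) : Tendsto (fun ω : ℝ => 1 - c / ω) atTop (𝓝 1) := by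
  simpa using (tendsto_const_nhds (x := (1 : ℝ))).sub (tendsto_const_nhds.div_atTop tendsto_id)

lemma tendsto_sq_add_sq_div_sq (t c : ℝ) :
    Tendsto (fun ω : ℝ => (t ^ 2 + (ω - c) ^ 2) / ω ^ 2) atTop (𝓝 1) := by
  have h := (tendsto_const_nhds (x := t ^ 2)).div_atTop (tendsto_pow_atTop two_ne_zero)
  have := h.add ((tendsto_one_sub_const_div c).pow 2)
  rw [zero_add, one_pow] at this
  refine this.congr' ?_
  filter_upwards [eventually_gt_atTop 0] with ω hω
  field_simp

lemma tendsto_half_log_sq_add_sq_sub_log (t c : ℝ) :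
    Tendsto (fun ω : ℝ => Real.log (t ^ 2 + (ω - c) ^ 2) / 2 - Real.log ω) atTop (𝓝 0) := by
  have h := ((Real.continuousAt_log one_ne_zero).tendsto.comp
    (tendsto_sq_add_sq_div_sq t c)).div_const 2
  rw [Real.log_one, zero_div] at h
  refine h.congr' ?_
  filter_upwards [eventually_gt_atTop c, eventually_gt_atTop 0] with ω hc hω
  have hγ : 0 < t ^ 2 + (ω - c) ^ 2 := by nlinarith [sq_nonneg t]
  simp only [Function.comp_apply]
  rw [Real.log_div hγ.ne' (by positivity), Real.log_pow]
  ring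

lemma tendsto_div_sq_add_sq (t c : ℝ) :
    Tendsto (fun ω : ℝ => t / (t ^ 2 + (ω - c) ^ 2)) atTop (𝓝 0) := by
  refine tendsto_const_nhds.div_atTop (tendsto_atTop_add_const_left _ _ ?_)
  exact (tendsto_pow_atTop two_ne_zero).comp (tendsto_atTop_add_const_right _ (-c) tendsto_id)

lemma tendsto_mul_div_sq_add_sq (t c : ℝ) :
    Tendsto (fun ω : ℝ => ω * (ω - c) / (t ^ 2 + (ω - c) ^ 2)) atTop (𝓝 1) := by
  have h := (tendsto_one_sub_const_div c).div (tendsto_sq_add_sq_div_sq t c) one_ne_zero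
  rw [div_one] at h
  refine h.congr' ?_
  filter_upwards [eventually_gt_atTop c, eventually_gt_atTop 0] with ω hc hω
  have hγ : 0 < t ^ 2 + (ω - c) ^ 2 := by nlinarith [sq_nonneg t]
  simp only [Pi.div_apply]
  field_simp

lemma hasDerivAt_arctan_sub_div {t : ℝ} (ht : t ≠ 0) (c ω : ℝ) :
    HasDerivAt (fun x : ℝ => Real.arctan ((x - c) / t)) (t / (t ^ 2 + (ω - c) ^ 2)) ω := by
  have h := (Real.hasDerivAt_arctan _).comp ω (((hasDerivAt_id' ω).sub_const c).div_const t)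
  refine h.congr_deriv ?_
  field_simp

lemma hasDerivAt_half_log_sq_add_sq {t : ℝ} (ht : t ≠ 0) (c ω : ℝ) :
    HasDerivAt (fun x : ℝ => Real.log (t ^ 2 + (x - c) ^ 2) / 2)
      ((ω - c) / (t ^ 2 + (ω - c) ^ 2)) ω := by
  have hγ : t ^ 2 + (ω - c) ^ 2 ≠ 0 := by positivity
  have h := ((((hasDerivAt_id' ω).sub_const c).fun_pow 2).const_add (t ^ 2)).log hγ
  refine (h.div_const 2).congr_deriv ?_
  field_simp
  norm_num [mul_comm]

/- With `t i = σ₀ - σᵢ` and `c i = ωᵢ` these are the sums over the zeros (or the poles) in `Θ`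
and in `ln |G (σ₀ + iω)|`. -/
noncomputable def argumentSum {ι : Type*} [Fintype ι] (t c : ι → ℝ) (ω : ℝ) : ℝ :=
  ∑ i, Real.arctan ((ω - c i) / t i)

noncomputable def logModulusSum {ι : Type*} [Fintype ι] (t c : ι → ℝ) (ω : ℝ) : ℝ :=
  ∑ i, Real.log (t i ^ 2 + (ω - c i) ^ 2) / 2

section FiniteFamily

variable {ι : Type*} [Fintype ι] {t : ι → ℝ} (c : ι → ℝ)

lemma hasDerivAt_argumentSum (ht : ∀ i, t i ≠ 0) (ω : ℝ) :
    HasDerivAt (argumentSum t c) (∑ i, t i / (t i ^ 2 + (ω - c i) ^ 2)) ω := by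
  unfold argumentSum
  exact HasDerivAt.fun_sum fun i _ => hasDerivAt_arctan_sub_div (ht i) (c i) ω

lemma hasDerivAt_logModulusSum (ht : ∀ i, t i ≠ 0) (ω : ℝ) :
    HasDerivAt (logModulusSum t c) (∑ i, (ω - c i) / (t i ^ 2 + (ω - c i) ^ 2)) ω := by
  unfold logModulusSum
  exact HasDerivAt.fun_sum fun i _ => hasDerivAt_half_log_sq_add_sq (ht i) (c i) ω

lemma tendsto_deriv_argumentSum (ht : ∀ i, t i ≠ 0) :
    Tendsto (deriv (argumentSum t c)) atTop (𝓝 0) := by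
  rw [funext fun ω => (hasDerivAt_argumentSum c ht ω).deriv]
  simpa using tendsto_finsetSum univ fun i _ => tendsto_div_sq_add_sq (t i) (c i)

lemma tendsto_mul_deriv_logModulusSum (ht : ∀ i, t i ≠ 0) :
    Tendsto (fun ω => ω * deriv (logModulusSum t c) ω) atTop (𝓝 (Fintype.card ι)) := by
  simp_rw [fun ω => (hasDerivAt_logModulusSum c ht ω).deriv, mul_sum, ← mul_div_assoc]
  simpa using tendsto_finsetSum univ fun i _ => tendsto_mul_div_sq_add_sq (t i) (c i)

variable (t) in
lemma tendsto_logModulusSum_sub_log :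
    Tendsto (fun ω => logModulusSum t c ω - Fintype.card ι * Real.log ω) atTop (𝓝 0) := by
  have h := tendsto_finsetSum univ fun i _ => tendsto_half_log_sq_add_sq_sub_log (t i) (c i)
  simpa [logModulusSum, sum_sub_distrib] using h

lemma differentiable_argumentSum (ht : ∀ i, t i ≠ 0) : Differentiable ℝ (argumentSum t c) :=
  fun ω => (hasDerivAt_argumentSum c ht ω).differentiableAt

lemma differentiable_logModulusSum (ht : ∀ i, t i ≠ 0) : Differentiable ℝ (logModulusSum t c) :=
  fun ω => (hasDerivAt_logModulusSum c ht ω).differentiableAt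

lemma prod_sub_ne_zero {σ0 : ℝ} {σ : ι → ℝ} (hσ : ∀ i, σ i ≠ σ0) (ω' : ι → ℝ) (ω : ℝ) :
    ∏ i, ((σ0 : ℂ) + ω * I - (σ i + ω' i * I)) ≠ 0 :=
  prod_ne_zero_iff.2 fun i _ h => hσ i (by simpa [sub_eq_zero, eq_comm] using congrArg re h)

lemma log_norm_prod_sub {σ0 : ℝ} {σ : ι → ℝ} (hσ : ∀ i, σ i ≠ σ0) (ω' : ι → ℝ) (ω : ℝ) :
    Real.log ‖∏ i, ((σ0 : ℂ) + ω * I - (σ i + ω' i * I))‖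
      = logModulusSum (fun i => σ0 - σ i) ω' ω := by
  rw [norm_prod, Real.log_prod fun i _ => norm_ne_zero_iff.2 <|
    prod_ne_zero_iff.1 (prod_sub_ne_zero hσ ω' ω) i (mem_univ i)]
  refine sum_congr rfl fun i _ => ?_
  rw [Complex.log_norm_eq_half_log]
  simp

end FiniteFamily

lemma log_norm_const_mul_prod_sub_div_prod_sub {ι κ : Type*} [Fintype ι] [Fintype κ]
    {k : ℝ} (hk : k ≠ 0) {σ0 : ℝ} {σz : ι → ℝ} {σp : κ → ℝ} (hz : ∀ i, σz i ≠ σ0)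
    (hp : ∀ j, σp j ≠ σ0) (ωz : ι → ℝ) (ωp : κ → ℝ) (ω : ℝ) :
    Real.log ‖(k : ℂ) * (∏ i, ((σ0 : ℂ) + ω * I - (σz i + ωz i * I))) /
        ∏ j, ((σ0 : ℂ) + ω * I - (σp j + ωp j * I))‖
      = Real.log |k| + (logModulusSum (fun i => σ0 - σz i) ωz ω
          - logModulusSum (fun j => σ0 - σp j) ωp ω) := by
  have hz' := norm_ne_zero_iff.2 (prod_sub_ne_zero hz ωz ω)
  have hp' := norm_ne_zero_iff.2 (prod_sub_ne_zero hp ωp ω)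
  have hk' : ‖(k : ℂ)‖ ≠ 0 := by simpa using hk
  rw [norm_div, norm_mul, Real.log_div (mul_ne_zero hk' hz') hp', Real.log_mul hk' hz',
    log_norm_prod_sub hz, log_norm_prod_sub hp, Complex.norm_real, Real.norm_eq_abs]
  ring

lemma tendsto_logModulusSum_sub_logModulusSum_atBot {ι κ : Type*} [Fintype ι] [Fintype κ]
    (tz cz : ι → ℝ) (tp cp : κ → ℝ) (hcard : Fintype.card ι < Fintype.card κ) :
    Tendsto (fun ω => logModulusSum tz cz ω - logModulusSum tp cp ω) atTop atBot := by
  have hlog : Tendsto (fun ω => ((Fintype.card ι : ℝ) - Fintype.card κ) * Real.log ω) atTop atBot :=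
    Real.tendsto_log_atTop.const_mul_atTop_of_neg (by simpa using hcard)
  have h := ((tendsto_logModulusSum_sub_log tz cz).sub
    (tendsto_logModulusSum_sub_log tp cp)).add_atBot hlog
  exact h.congr fun ω => by ring

lemma tendsto_mul_deriv_sub_mul_div_atTop {Θ Θ' L L' : ℝ → ℝ} {σ ℓ : ℝ} (hσ : σ ≠ 0)
    (hΘ : ∀ ω, HasDerivAt Θ (Θ' ω) ω) (hL : ∀ ω, HasDerivAt L (L' ω) ω)
    (hΘ' : Tendsto Θ' atTop (𝓝 0)) (hL_atBot : Tendsto L atTop atBot)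
    (hL' : Tendsto (fun ω => ω * L' ω) atTop (𝓝 ℓ)) :
    Tendsto (fun ω => σ * deriv (fun x => Θ x - x * (L x / σ)) ω) atTop atTop := by
  have hderiv : ∀ ω, σ * deriv (fun x => Θ x - x * (L x / σ)) ω
      = σ * Θ' ω + (-L ω + -(ω * L' ω)) := fun ω => by
    rw [((hΘ ω).fun_sub ((hasDerivAt_id' ω).fun_mul ((hL ω).div_const σ))).deriv]
    field_simp
    ring
  simp_rw [hderiv]
  simpa using (hΘ'.const_mul σ).add_atTop
    ((tendsto_neg_atBot_atTop.comp hL_atBot).atTop_add hL'.neg)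

theorem stmt_17_general
    (m n : ℕ) (kG : ℝ) (hkG : kG ≠ 0)
    (σz ωz : Fin m → ℝ) (σp ωp : Fin n → ℝ)
    (σ0 : ℝ) (hσ0 : σ0 < 0)
    (hz : ∀ k, σz k ≠ σ0) (hp : ∀ i, σp i ≠ σ0)
    (G : ℂ → ℂ)
    (hG : ∀ s : ℂ, G s =
      (kG : ℂ) * (∏ k : Fin m, (s - ((σz k : ℂ) + (ωz k : ℂ) * Complex.I))) /
        (∏ i : Fin n, (s - ((σp i : ℂ) + (ωp i : ℂ) * Complex.I))))
    (H : ℝ → ℝ)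
    (hH : ∀ ω : ℝ, H ω = Real.log ‖G ((σ0 : ℂ) + (ω : ℂ) * Complex.I)‖ / σ0)
    (Θ : ℝ → ℝ)
    (hΘ : ∀ ω : ℝ, Θ ω =
      (∑ k : Fin m, Real.arctan ((ω - ωz k) / (σ0 - σz k)))
        - ∑ i : Fin n, Real.arctan ((ω - ωp i) / (σ0 - σp i)))
    (φ : ℝ → ℝ) (hφ : ∀ ω : ℝ, φ ω = Θ ω - ω * H ω)
    (hmn : m < n)
    : Filter.Tendsto H Filter.atTop Filter.atTop ∧
      Filter.Tendsto (fun ω => σ0 * deriv φ ω) Filter.atTop Filter.atTop ∧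
      ∃ Ω : ℝ, ∀ ω : ℝ, Ω < ω → deriv φ ω < 0 := by
  have htz : ∀ k, σ0 - σz k ≠ 0 := fun k => sub_ne_zero.2 (hz k).symm
  have htp : ∀ i, σ0 - σp i ≠ 0 := fun i => sub_ne_zero.2 (hp i).symm
  set Az := argumentSum (fun k => σ0 - σz k) ωz
  set Ap := argumentSum (fun i => σ0 - σp i) ωp
  set Lz := logModulusSum (fun k => σ0 - σz k) ωz
  set Lp := logModulusSum (fun i => σ0 - σp i) ωp
  set L : ℝ → ℝ := fun ω => Real.log |kG| + (Lz ω - Lp ω)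
  have hHL : H = fun ω => L ω / σ0 := funext fun ω => by
    rw [hH, hG, log_norm_const_mul_prod_sub_div_prod_sub hkG hz hp]
  have hφL : φ = fun ω => (Az ω - Ap ω) - ω * (L ω / σ0) := funext fun ω => by
    rw [hφ, hΘ, hHL]; rfl
  have hAd : ∀ ω, HasDerivAt (fun ω => Az ω - Ap ω) (deriv Az ω - deriv Ap ω) ω := fun ω =>
    (differentiable_argumentSum ωz htz ω).hasDerivAt.sub
      (differentiable_argumentSum ωp htp ω).hasDerivAt
  have hLd : ∀ ω, HasDerivAt L (deriv Lz ω - deriv Lp ω) ω := fun ω =>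
    ((differentiable_logModulusSum ωz htz ω).hasDerivAt.sub
      (differentiable_logModulusSum ωp htp ω).hasDerivAt).const_add _
  have hA' : Tendsto (fun ω => deriv Az ω - deriv Ap ω) atTop (𝓝 0) := by
    simpa using (tendsto_deriv_argumentSum ωz htz).sub (tendsto_deriv_argumentSum ωp htp)
  have hL' : Tendsto (fun ω => ω * (deriv Lz ω - deriv Lp ω)) atTop (𝓝 ((m : ℝ) - n)) := by
    simpa [mul_sub] using
      (tendsto_mul_deriv_logModulusSum ωz htz).sub (tendsto_mul_deriv_logModulusSum ωp htp)
  have hL_atBot : Tendsto L atTop atBot := tendsto_atBot_add_const_left _ _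
    (tendsto_logModulusSum_sub_logModulusSum_atBot _ ωz _ ωp (by simpa using hmn))
  have hσφ := hφL ▸ tendsto_mul_deriv_sub_mul_div_atTop hσ0.ne hAd hLd hA' hL_atBot hL'
  have hH_atTop : Tendsto H atTop atTop := by
    rw [hHL]
    simpa [div_eq_mul_inv] using hL_atBot.atBot_mul_const_of_neg (inv_lt_zero.2 hσ0)
  obtain ⟨Ω, hΩ⟩ := eventually_atTop.1 (hσφ.eventually_gt_atTop 0)
  exact ⟨hH_atTop, hσφ, Ω, fun ω hω => neg_of_mul_pos_right (hΩ ω hω.le) hσ0.le⟩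

theorem stmt_17
    (m n : ℕ) (kG : ℝ) (hkG : kG ≠ 0)
    (σz ωz : Fin m → ℝ) (σp ωp : Fin n → ℝ)
    (σ0 : ℝ) (hσ0 : σ0 < 0)
    (hz : ∀ k, σz k ≠ σ0) (hp : ∀ i, σp i ≠ σ0)
    (G : ℂ → ℂ)
    (hG : ∀ s : ℂ, G s =
      (kG : ℂ) * (∏ k : Fin m, (s - ((σz k : ℂ) + (ωz k : ℂ) * Complex.I))) /
        (∏ i : Fin n, (s - ((σp i : ℂ) + (ωp i : ℂ) * Complex.I))))
    (γz : Fin m → ℝ → ℝ)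
    (hγz : ∀ (k : Fin m) (ω : ℝ), γz k ω = (σ0 - σz k) ^ 2 + (ω - ωz k) ^ 2)
    (γp : Fin n → ℝ → ℝ)
    (hγp : ∀ (i : Fin n) (ω : ℝ), γp i ω = (σ0 - σp i) ^ 2 + (ω - ωp i) ^ 2)
    (H : ℝ → ℝ)
    (hH : ∀ ω : ℝ, H ω = Real.log ‖G ((σ0 : ℂ) + (ω : ℂ) * Complex.I)‖ / σ0)
    (Θ : ℝ → ℝ)
    (hΘ : ∀ ω : ℝ, Θ ω =
      (∑ k : Fin m, Real.arctan ((ω - ωz k) / (σ0 - σz k)))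
        - ∑ i : Fin n, Real.arctan ((ω - ωp i) / (σ0 - σp i)))
    (φ : ℝ → ℝ) (hφ : ∀ ω : ℝ, φ ω = Θ ω - ω * H ω)
    (hmn : m < n)
    : Filter.Tendsto H Filter.atTop Filter.atTop ∧
      Filter.Tendsto (fun ω => σ0 * deriv φ ω) Filter.atTop Filter.atTop ∧
      ∃ Ω : ℝ, ∀ ω : ℝ, Ω < ω → deriv φ ω < 0 :=
  stmt_17_general m n kG hkG σz ωz σp ωp σ0 hσ0 hz hp G hG H hH Θ hΘ φ hφ hmn
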